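/- (Theorem 1, characterization of the optimal multiplier.) Let K > 0, 0 ≤ t < T and S < λ m̄ (T-t). Then there exists a unique x* < 0 satisfying S = (T-t) H'(x*) + x*/(2K), and this x* is the unique maximizer over (-∞,0] of the function x ↦ S x - (T-t) H(x) - x²/(4K). -/

import Mathlib

open MeasureTheory Filter Set Topology

/-!
For `x < 0` we have `H'(x) = λ G(-1/x)`, and `G` is a nondecreasing primitive of the nonnegative
function `p f(p)`, increasing to `m̄`. So `H'` is nondecreasing on `(-∞, 0)`, bounded by `λ m̄`, and
tends to `λ m̄` at `0⁻`; hence `φ(x) = (T-t) H'(x) + x/(2K)` is strictly increasing on `(-∞, 0)`,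
below `S` far to the left and above `S` near `0`. As `φ` is the derivative of
`(T-t) H(x) + x²/(4K)`, Darboux's theorem yields a root of `φ = S`, unique by strict monotonicity;
the objective has derivative `S - φ`, so it increases up to that root and decreases after it.
-/

theorem monotoneOn_intervalIntegral_of_nonneg {g : ℝ → ℝ} (hg : IntegrableOn g (Ioi 0))
    (hnn : ∀ p > 0, 0 ≤ g p) : MonotoneOn (fun b => ∫ p in (0 : ℝ)..b, g p) (Ici 0) :=
  fun _ ha _ _ hab => intervalIntegral.integral_mono_interval le_rfl ha hab
    ((ae_restrict_mem measurableSet_Ioc).mono fun p hp => hnn p hp.1)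
    ((intervalIntegrable_iff_integrableOn_Ioc_of_le (ha.trans hab)).2
      (hg.mono_set Ioc_subset_Ioi_self))

theorem intervalIntegral_le_integral_Ioi_of_nonneg {g : ℝ → ℝ} (hg : IntegrableOn g (Ioi 0))
    (hnn : ∀ p > 0, 0 ≤ g p) {b : ℝ} (hb : 0 ≤ b) :
    ∫ p in (0 : ℝ)..b, g p ≤ ∫ p in Ioi 0, g p := by
  rw [intervalIntegral.integral_of_le hb]
  exact setIntegral_mono_set hg ((ae_restrict_mem measurableSet_Ioi).mono hnn)
    Ioc_subset_Ioi_self.eventuallyLE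

theorem tendsto_neg_one_div_nhdsLT_zero : Tendsto (fun x : ℝ => -1 / x) (𝓝[<] 0) atTop := by
  simpa [neg_div] using (tendsto_inv_nhdsLT_zero (𝕜 := ℝ))

theorem MonotoneOn.comp_neg_one_div {G : ℝ → ℝ} (hG : MonotoneOn G (Ioi 0)) :
    MonotoneOn (fun x => G (-1 / x)) (Iio 0) := by
  intro x (hx : x < 0) y (hy : y < 0) hxy
  refine hG (div_pos_of_neg_of_neg neg_one_lt_zero hx) (div_pos_of_neg_of_neg neg_one_lt_zero hy) ?_
  rw [neg_div, neg_div, neg_le_neg_iff]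
  exact one_div_le_one_div_of_neg_of_le hy hxy

theorem lt_of_hasDerivAt_sub_of_strictMonoOn {g φ : ℝ → ℝ} {S xs : ℝ}
    (hg : ∀ x, HasDerivAt g (S - φ x) x) (hφ : StrictMonoOn φ (Iio 0)) (hxs : xs < 0)
    (hroot : φ xs = S) {y : ℝ} (hy : y ≤ 0) (hne : y ≠ xs) : g y < g xs := by
  have hcont : Continuous g := continuous_iff_continuousAt.2 fun x => (hg x).continuousAt
  have hderiv (s : Set ℝ) : ∀ x ∈ interior s, HasDerivWithinAt g (S - φ x) (interior s) x :=
    fun x _ => (hg x).hasDerivWithinAt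
  rcases hne.lt_or_gt with hlt | hgt
  · refine strictMonoOn_of_hasDerivWithinAt_pos (convex_Iic xs) hcont.continuousOn
      (hderiv _) (fun x hx => ?_) hlt.le self_mem_Iic hlt
    rw [interior_Iic] at hx
    linarith [hφ (hx.trans hxs) hxs hx]
  · refine strictAntiOn_of_hasDerivWithinAt_neg (convex_Icc xs 0) hcont.continuousOn
      (hderiv _) (fun x hx => ?_) ⟨le_rfl, hxs.le⟩ ⟨hgt.le, hy⟩ hgt
    rw [interior_Icc] at hx
    linarith [hφ hxs hx.2 hx.1]

theorem exists_root_of_hasDerivAt_sub_of_strictMonoOn {g φ : ℝ → ℝ} {L S a : ℝ}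
    (hg : ∀ x, HasDerivAt g (S - φ x) x) (hφ : StrictMonoOn φ (Iio 0))
    (hlim : Tendsto φ (𝓝[<] 0) (𝓝 L)) (hSL : S < L) (ha : a < 0) (haS : φ a < S) :
    ∃ xs < 0, φ xs = S ∧ (∀ y < 0, φ y = S → y = xs) ∧
      ∀ y ≤ 0, y ≠ xs → g y < g xs := by
  obtain ⟨c, hSc, hc⟩ := ((hlim.eventually (lt_mem_nhds hSL)).and self_mem_nhdsWithin).exists
  -- Darboux: the image of `Iio 0` under the derivative `S - φ` is order-connected.
  obtain ⟨xs, hxs, hzero⟩ : (0 : ℝ) ∈ (fun x => S - φ x) '' Iio 0 :=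
    (ordConnected_Iio.image_hasDerivWithinAt fun x _ => (hg x).hasDerivWithinAt).out
      ⟨c, hc, rfl⟩ ⟨a, ha, rfl⟩ ⟨by linarith, by linarith⟩
  have hroot : φ xs = S := by linarith [hzero]
  refine ⟨xs, hxs, hroot, fun y hy hy' => hφ.injOn hy hxs (hy'.trans hroot.symm), ?_⟩
  exact fun y hy hne => lt_of_hasDerivAt_sub_of_strictMonoOn hg hφ hxs hroot hy hne

theorem exists_optimal_multiplier {H H' : ℝ → ℝ} {M D K S : ℝ}
    (hH : ∀ x, HasDerivAt H (H' x) x) (hmono : MonotoneOn H' (Iio 0)) (hle : ∀ x < 0, H' x ≤ M)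
    (hlim : Tendsto H' (𝓝[<] 0) (𝓝 M)) (hD : 0 ≤ D) (hK : 0 < K) (hS : S < M * D) :
    ∃ xs < 0, D * H' xs + xs / (2 * K) = S ∧
      (∀ y < 0, D * H' y + y / (2 * K) = S → y = xs) ∧
      ∀ y ≤ 0, y ≠ xs →
        S * y - D * H y - y ^ 2 / (4 * K) < S * xs - D * H xs - xs ^ 2 / (4 * K) := by
  set φ := fun x => D * H' x + x / (2 * K)
  have hg (x : ℝ) :
      HasDerivAt (fun y => S * y - D * H y - y ^ 2 / (4 * K)) (S - φ x) x := by
    refine ((((hasDerivAt_id' x).const_mul S).sub ((hH x).const_mul D)).sub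
      ((hasDerivAt_pow 2 x).div_const (4 * K))).congr_deriv ?_
    simp only [φ]
    field_simp
    ring
  have hφ : StrictMonoOn φ (Iio 0) := fun x hx y hy hxy =>
    add_lt_add_of_le_of_lt (mul_le_mul_of_nonneg_left (hmono hx hy hxy.le) hD)
      (div_lt_div_of_pos_right hxy (by positivity))
  have hφlim : Tendsto φ (𝓝[<] 0) (𝓝 (D * M)) := by
    simpa using (hlim.const_mul D).add
      (((continuous_id.div_const (2 * K)).tendsto 0).mono_left nhdsWithin_le_nhds)
  -- `H' ≤ M` gives `φ a ≤ D * M + a / (2 * K) < S`.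
  set a := 2 * K * (S - D * M) - 1
  have ha : a < 0 := by nlinarith
  have haS : φ a < S := by
    have : a / (2 * K) < S - D * M := by rw [div_lt_iff₀ (by positivity)]; linarith
    linarith [mul_le_mul_of_nonneg_left (hle a ha) hD]
  exact exists_root_of_hasDerivAt_sub_of_strictMonoOn hg hφ hφlim (by linarith) ha haS

theorem stmt_12_general (f G H H' : ℝ → ℝ) (mbar lam : ℝ)
    (hf_pos : ∀ p : ℝ, 0 < p → 0 < f p)
    (hmean_int : MeasureTheory.IntegrableOn (fun p : ℝ => p * f p) (Set.Ioi 0))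
    (hmbar : mbar = ∫ p in Set.Ioi (0 : ℝ), p * f p)
    (hG : ∀ b : ℝ, G b = ∫ p in (0 : ℝ)..b, p * f p)
    (hlam : 0 < lam)
    (hH'deriv : ∀ x : ℝ, HasDerivAt H (H' x) x)
    (hH'neg : ∀ x < (0 : ℝ), H' x = lam * G (-1 / x))
    (K t T S : ℝ) (hK : 0 < K) (htT : t < T)
    (hS : S < lam * mbar * (T - t)) :
    ∃ xs : ℝ, xs < 0 ∧ S = (T - t) * H' xs + xs / (2 * K) ∧
      (∀ y : ℝ, y < 0 → S = (T - t) * H' y + y / (2 * K) → y = xs) ∧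
      (∀ y ∈ Set.Iic (0 : ℝ),
        S * y - (T - t) * H y - y ^ 2 / (4 * K)
          ≤ S * xs - (T - t) * H xs - xs ^ 2 / (4 * K)) ∧
      (∀ y ∈ Set.Iic (0 : ℝ),
        S * y - (T - t) * H y - y ^ 2 / (4 * K)
            = S * xs - (T - t) * H xs - xs ^ 2 / (4 * K) → y = xs) := by
  have hpf : ∀ p > 0, 0 ≤ p * f p := fun p hp => mul_nonneg hp.le (hf_pos p hp).le
  have hG' : G = fun b => ∫ p in (0 : ℝ)..b, p * f p := funext hG
  have hGmono : MonotoneOn G (Ioi 0) :=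
    hG' ▸ (monotoneOn_intervalIntegral_of_nonneg hmean_int hpf).mono Ioi_subset_Ici_self
  have hGlim : Tendsto G atTop (𝓝 mbar) :=
    hG' ▸ hmbar ▸ intervalIntegral_tendsto_integral_Ioi 0 hmean_int tendsto_id
  have hH'mono : MonotoneOn H' (Iio 0) := fun x hx y hy hxy => by
    rw [hH'neg x hx, hH'neg y hy]
    exact mul_le_mul_of_nonneg_left (hGmono.comp_neg_one_div hx hy hxy) hlam.le
  have hH'le : ∀ x < 0, H' x ≤ lam * mbar := fun x hx => by
    rw [hH'neg x hx, hG, hmbar]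
    exact mul_le_mul_of_nonneg_left (intervalIntegral_le_integral_Ioi_of_nonneg hmean_int hpf
      (div_pos_of_neg_of_neg neg_one_lt_zero hx).le) hlam.le
  have hH'lim : Tendsto H' (𝓝[<] 0) (𝓝 (lam * mbar)) :=
    ((hGlim.comp tendsto_neg_one_div_nhdsLT_zero).const_mul lam).congr'
      (eventually_nhdsWithin_of_forall fun x hx => (hH'neg x hx).symm)
  obtain ⟨xs, hxs, hroot, huniq, hmax⟩ := exists_optimal_multiplier hH'deriv hH'mono hH'le
    hH'lim (sub_pos.2 htT).le hK hS
  refine ⟨xs, hxs, hroot.symm, fun y hy h => huniq y hy h.symm, fun y hy => ?_,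
    fun y hy heq => by_contra fun hne => (hmax y hy hne).ne heq⟩
  rcases eq_or_ne y xs with rfl | hne
  exacts [le_rfl, (hmax y hy hne).le]

/-- (Theorem 1, characterization of the optimal multiplier.) Let `K > 0`, `0 ≤ t < T` and
`S < λ m̄ (T-t)`. Then there is a unique `x* < 0` with `S = (T-t)H'(x*) + x*/(2K)`, and this
`x*` is the unique maximizer over `(-∞,0]` of `x ↦ S x - (T-t)H(x) - x²/(4K)`. -/
theorem stmt_12 (f F G H H' : ℝ → ℝ) (mbar lam : ℝ)
    (hf_cont : Continuous f)
    (hf_nonpos : ∀ p ≤ (0 : ℝ), f p = 0)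
    (hf_pos : ∀ p : ℝ, 0 < p → 0 < f p)
    (hf_int : (∫ p in Set.Ioi (0 : ℝ), f p) = 1)
    (hf_tail : Filter.Tendsto (fun p : ℝ => p ^ 3 * f p) Filter.atTop (nhds 0))
    (hmean_int : MeasureTheory.IntegrableOn (fun p : ℝ => p * f p) (Set.Ioi 0))
    (hmbar : mbar = ∫ p in Set.Ioi (0 : ℝ), p * f p)
    (hF : ∀ b : ℝ, F b = ∫ p in (0 : ℝ)..b, f p)
    (hG : ∀ b : ℝ, G b = ∫ p in (0 : ℝ)..b, p * f p)
    (hlam : 0 < lam)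
    (hHneg : ∀ x < (0 : ℝ), H x = -(lam * x) * ∫ p in (0 : ℝ)..(-1 / x), F p)
    (hHpos : ∀ x : ℝ, 0 ≤ x → H x = lam * (1 + x * mbar))
    (hH'deriv : ∀ x : ℝ, HasDerivAt H (H' x) x)
    (hH'neg : ∀ x < (0 : ℝ), H' x = lam * G (-1 / x))
    (hH'pos : ∀ x : ℝ, 0 ≤ x → H' x = lam * mbar)
    (K t T S : ℝ) (hK : 0 < K) (ht : 0 ≤ t) (htT : t < T)
    (hS : S < lam * mbar * (T - t)) :
    ∃ xs : ℝ, xs < 0 ∧ S = (T - t) * H' xs + xs / (2 * K) ∧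
      (∀ y : ℝ, y < 0 → S = (T - t) * H' y + y / (2 * K) → y = xs) ∧
      (∀ y ∈ Set.Iic (0 : ℝ),
        S * y - (T - t) * H y - y ^ 2 / (4 * K)
          ≤ S * xs - (T - t) * H xs - xs ^ 2 / (4 * K)) ∧
      (∀ y ∈ Set.Iic (0 : ℝ),
        S * y - (T - t) * H y - y ^ 2 / (4 * K)
            = S * xs - (T - t) * H xs - xs ^ 2 / (4 * K) → y = xs) :=
  stmt_12_general f G H H' mbar lam hf_pos hmean_int hmbar hG hlam hH'deriv hH'neg K t T S hK htT hS
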